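/- Let $S_1,\ldots,S_K$ be mutually independent random symmetric $p\times p$ matrices with finite second moments and common mean $E[S_k]=M\neq 0$ for all $k$, and $\delta_k=p^{-1}E[\|S_k-M\|_F^2]>0$. Let $c=\operatorname{tr}(M^2)/p$, $D=\operatorname{diag}(\delta_1,\ldots,\delta_K)$, and $\mu = c/(1+c\,\mathbf{1}^\top D^{-1}\mathbf{1})$. Then the unconstrained minimizer $a_k^\star=(D+C)^{-1}c_k$ of the mean squared error satisfies $A^\star=(a_1^\star\cdots a_K^\star)=\mu\,D^{-1}\mathbf{1}\mathbf{1}^\top$; i.e., all columns coincide and their entries equal $a_{jk}^\star = \mu/\delta_j = \mathrm{NMSE}(S_j)^{-1}/(1+\sum_{i=1}^K\mathrm{NMSE}(S_i)^{-1})$, where $\mathrm{NMSE}(S_j)=E[\|S_j-M\|_F^2]/\|M\|_F^2$. -/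

import Mathlib

open MeasureTheory Matrix ProbabilityTheory Filter Asymptotics

noncomputable section

/-- Borel/pi measurable structure on matrices (a matrix is a function of its entries). -/
instance matrixMeasurableSpace {p : ℕ} : MeasurableSpace (Matrix (Fin p) (Fin p) ℝ) :=
  inferInstanceAs (MeasurableSpace (Fin p → Fin p → ℝ))

/-- Squared Frobenius norm `‖A‖_F² = tr(Aᵀ A)`. -/
def frobSq {p : ℕ} (A : Matrix (Fin p) (Fin p) ℝ) : ℝ := (Aᵀ * A).trace

/-- Entrywise expectation of a random matrix. -/
def matExp {Ω : Type*} [MeasurableSpace Ω] (μ : Measure Ω) {p : ℕ}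
    (S : Ω → Matrix (Fin p) (Fin p) ℝ) : Matrix (Fin p) (Fin p) ℝ :=
  Matrix.of fun i j => ∫ ω, S ω i j ∂μ

/-! When all means equal `M`, every entry of `C` is `c = tr(M²)/p`, so `D + C = D + c𝟏𝟏ᵀ`.
Applied to `μ D⁻¹𝟏` this matrix gives `μ (1 + c 𝟏ᵀD⁻¹𝟏) 𝟏 = c𝟏 = cₖ`, and it is invertible by the
Sherman–Morrison argument (`1 + c 𝟏ᵀD⁻¹𝟏 > 0` as `c ≥ 0`), so every column of `A⋆` is `μ D⁻¹𝟏`.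
Finally `NMSE(Sⱼ) = δⱼ / c`, which turns `μ / δⱼ` into the second formula. -/

namespace Matrix

variable {ι 𝕜 : Type*} [Fintype ι] [DecidableEq ι] [Field 𝕜] {d : ι → 𝕜} {c : 𝕜}

theorem diagonal_add_const_mulVec (x : ι → 𝕜) :
    (diagonal d + of fun _ _ => c) *ᵥ x = fun i => d i * x i + c * ∑ j, x j := by
  ext i
  rw [add_mulVec, Pi.add_apply, mulVec_diagonal]
  simp [mulVec, dotProduct, Finset.mul_sum]

/-- A kernel vector `x` has `xᵢ = -c (∑ x) / dᵢ`, so summing gives `(1 + c ∑ dᵢ⁻¹) ∑ x = 0`. -/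
theorem isUnit_det_diagonal_add_const (hd : ∀ i, d i ≠ 0) (h : 1 + c * ∑ i, (d i)⁻¹ ≠ 0) :
    IsUnit (diagonal d + of fun _ _ => c).det := by
  rw [isUnit_iff_ne_zero, Ne, ← exists_mulVec_eq_zero_iff]
  rintro ⟨x, hx0, hx⟩
  rw [diagonal_add_const_mulVec] at hx
  have hcoord (i : ι) : x i = -(c * ∑ j, x j) / d i := by
    have hxi : d i * x i + c * ∑ j, x j = 0 := congrFun hx i
    rw [eq_div_iff (hd i)]
    linear_combination hxi
  have hsum : ∑ j, x j = -(c * ∑ j, x j) * ∑ i, (d i)⁻¹ := by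
    conv_lhs => rw [Finset.sum_congr rfl fun i _ => hcoord i]
    simp only [div_eq_mul_inv, Finset.mul_sum]
  have hfactor : (1 + c * ∑ i, (d i)⁻¹) * ∑ j, x j = 0 := by linear_combination hsum
  have hzero : ∑ j, x j = 0 := (mul_eq_zero.mp hfactor).resolve_left h
  exact hx0 (funext fun i => by simp [hcoord i, hzero])

theorem diagonal_add_const_mulVec_solution (hd : ∀ i, d i ≠ 0) (h : 1 + c * ∑ i, (d i)⁻¹ ≠ 0) :
    (diagonal d + of fun _ _ => c) *ᵥ (fun i => c / (1 + c * ∑ j, (d j)⁻¹) / d i) =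
      fun _ => c := by
  rw [diagonal_add_const_mulVec]
  ext i
  set s := ∑ j, (d j)⁻¹
  have hsum : ∑ j, c / (1 + c * s) / d j = c / (1 + c * s) * s := by
    simp only [div_eq_mul_inv _ (d _), ← Finset.mul_sum, s]
  rw [hsum, mul_div_cancel₀ _ (hd i)]
  field_simp

theorem inv_diagonal_add_const_mulVec_const (hd : ∀ i, d i ≠ 0)
    (h : 1 + c * ∑ i, (d i)⁻¹ ≠ 0) :
    (diagonal d + of fun _ _ => c)⁻¹ *ᵥ (fun _ => c) =
      fun i => c / (1 + c * ∑ j, (d j)⁻¹) / d i := by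
  have := invertibleOfIsUnitDet _ (isUnit_det_diagonal_add_const hd h)
  exact inv_mulVec_eq_vec (diagonal_add_const_mulVec_solution hd h).symm

end Matrix

theorem frobSq_nonneg {p : ℕ} (A : Matrix (Fin p) (Fin p) ℝ) : 0 ≤ frobSq A :=
  (Matrix.posSemidef_conjTranspose_mul_self A).trace_nonneg

theorem frobSq_of_transpose_eq {p : ℕ} {A : Matrix (Fin p) (Fin p) ℝ} (hA : Aᵀ = A) :
    frobSq A = (A * A).trace := by
  rw [frobSq, hA]

theorem equal_covariance_optimal_coefficients_general
    {Ω : Type*} [MeasurableSpace Ω] (μ : Measure Ω)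
    (p K : ℕ) (hp : 0 < p)
    (S : Fin K → Ω → Matrix (Fin p) (Fin p) ℝ)
    (M : Matrix (Fin p) (Fin p) ℝ) (hMsymm : Mᵀ = M)
    (δ : Fin K → ℝ)
    (hδ : ∀ k, δ k = (p : ℝ)⁻¹ * ∫ ω, frobSq (S k ω - M) ∂μ)
    (hδpos : ∀ k, 0 < δ k)
    (c : ℝ) (hc : c = (M * M).trace / p)
    (C : Matrix (Fin K) (Fin K) ℝ)
    (hC : ∀ i j, C i j = (p : ℝ)⁻¹ * (M * M).trace)
    (D : Matrix (Fin K) (Fin K) ℝ) (hD : D = Matrix.diagonal δ)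
    (mu : ℝ) (hmu : mu = c / (1 + c * ∑ i, (δ i)⁻¹))
    (nmse : Fin K → ℝ)
    (hnmse : ∀ j, nmse j = (∫ ω, frobSq (S j ω - M) ∂μ) / frobSq M)
    (astar : Fin K → Fin K → ℝ)
    (hastar : ∀ k, astar k = (D + C)⁻¹ *ᵥ (fun i => C i k)) :
    ∀ (k j : Fin K),
      astar k j = mu / δ j
        ∧ astar k j = (nmse j)⁻¹ / (1 + ∑ i, (nmse i)⁻¹) := by
  intro k j
  have hCc : C = of fun _ _ => c := ext fun i j => by rw [hC, hc, of_apply, inv_mul_eq_div]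
  have hc0 : 0 ≤ c := by
    rw [hc, ← frobSq_of_transpose_eq hMsymm]
    exact div_nonneg (frobSq_nonneg M) p.cast_nonneg
  have hden : 1 + c * ∑ i, (δ i)⁻¹ ≠ 0 := by
    have : 0 ≤ ∑ i, (δ i)⁻¹ := Finset.sum_nonneg fun i _ => (inv_pos.mpr (hδpos i)).le
    positivity
  have hastar_eq : astar k = fun i => mu / δ i := by
    rw [hastar, hD, hCc, hmu]
    exact inv_diagonal_add_const_mulVec_const (fun i => (hδpos i).ne') hden
  have hnmse_inv (i : Fin K) : (nmse i)⁻¹ = c / δ i := by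
    rw [hnmse, hδ, hc, ← frobSq_of_transpose_eq hMsymm]
    field_simp
  have hsum : ∑ i, (nmse i)⁻¹ = c * ∑ i, (δ i)⁻¹ := by
    simp only [hnmse_inv, div_eq_mul_inv, Finset.mul_sum]
  refine ⟨congrFun hastar_eq j, ?_⟩
  rw [congrFun hastar_eq j, hmu, hsum, hnmse_inv, div_right_comm]

/-- equal-covariance case. When `E[S_k] = M` for all `k`, the
unconstrained minimizer `a⋆ₖ = (D+C)⁻¹cₖ` satisfies `A⋆ = μ D⁻¹𝟏𝟏ᵀ`, i.e. all
columns coincide with entries `a⋆_{jk} = μ/δⱼ = NMSE(Sⱼ)⁻¹/(1+∑ᵢNMSE(Sᵢ)⁻¹)`. -/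
theorem equal_covariance_optimal_coefficients
    {Ω : Type*} [MeasurableSpace Ω] (μ : Measure Ω) [IsProbabilityMeasure μ]
    (p K : ℕ) (hp : 0 < p) (hK : 0 < K)
    (S : Fin K → Ω → Matrix (Fin p) (Fin p) ℝ)
    (hmeas : ∀ k, Measurable (S k))
    (hsymm : ∀ k ω, (S k ω)ᵀ = S k ω)
    (hL2 : ∀ k i j, MemLp (fun ω => S k ω i j) 2 μ)
    (hindep : iIndepFun S μ)
    (M : Matrix (Fin p) (Fin p) ℝ) (hMsymm : Mᵀ = M) (hM0 : M ≠ 0)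
    (hM : ∀ k, matExp μ (S k) = M)
    (δ : Fin K → ℝ)
    (hδ : ∀ k, δ k = (p : ℝ)⁻¹ * ∫ ω, frobSq (S k ω - M) ∂μ)
    (hδpos : ∀ k, 0 < δ k)
    (c : ℝ) (hc : c = (M * M).trace / p)
    (C : Matrix (Fin K) (Fin K) ℝ)
    (hC : ∀ i j, C i j = (p : ℝ)⁻¹ * (M * M).trace)
    (D : Matrix (Fin K) (Fin K) ℝ) (hD : D = Matrix.diagonal δ)
    (mu : ℝ) (hmu : mu = c / (1 + c * ∑ i, (δ i)⁻¹))
    (nmse : Fin K → ℝ)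
    (hnmse : ∀ j, nmse j = (∫ ω, frobSq (S j ω - M) ∂μ) / frobSq M)
    (astar : Fin K → Fin K → ℝ)
    (hastar : ∀ k, astar k = (D + C)⁻¹ *ᵥ (fun i => C i k)) :
    ∀ (k j : Fin K),
      astar k j = mu / δ j
        ∧ astar k j = (nmse j)⁻¹ / (1 + ∑ i, (nmse i)⁻¹) :=
  equal_covariance_optimal_coefficients_general μ p K hp S M hMsymm δ hδ hδpos c hc C hC D hD mu hmu
    nmse hnmse astar hastar
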